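/- arXiv:2505.12003 — 2 statements merged into one kernel-verified Lean document; each statement's English description precedes it below -/
import Mathlib

section
/- Let d ∈ ℕ, X ⊆ ℝ^d, σ = ReLU, and let f, g ∈ G_{d,σ}(X,ℝ). Then there exist L ∈ ℕ, h₁, h₂ ∈ ℕ, vectors v₁ ∈ ℝ^{h₁}, v₂ ∈ ℝ^{h₂} with ‖v₁‖₂ = ‖v₂‖₂ = 1, affine maps Q₁ : ℝ^d → ℝ^{h₁} and Q₂ : ℝ^d → ℝ^{h₂}, layers Φ_{θ₁}, …, Φ_{θ_L} ∈ E_{h₁+h₂,σ}, and a symmetric positive semi-definite matrix M ∈ ℝ^{(h₁+h₂)×(h₁+h₂)} with ‖M‖₂ ≤ 1, such that for all x ∈ X the concatenated vector (f(x)·v₁, g(x)·v₂) ∈ ℝ^{h₁+h₂} equals M applied to (Φ_{θ_L} ∘ ⋯ ∘ Φ_{θ₁})((Q₁(x), Q₂(x))). -/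
open scoped BigOperators

noncomputable section

def relu (t : ℝ) : ℝ := max t 0

def entrywise {n : ℕ} (σ : ℝ → ℝ) (x : EuclideanSpace ℝ (Fin n)) : EuclideanSpace ℝ (Fin n) :=
  WithLp.toLp 2 (fun i => σ (x i))

def matVec {k h : ℕ} (W : Matrix (Fin k) (Fin h) ℝ) (x : EuclideanSpace ℝ (Fin h)) :
    EuclideanSpace ℝ (Fin k) :=
  Matrix.toEuclideanLin W x

/-- Spectral norm of a real matrix, as the operator norm between Euclidean spaces. -/
def specNorm {k h : ℕ} (W : Matrix (Fin k) (Fin h) ℝ) : ℝ :=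
  ‖LinearMap.toContinuousLinearMap (Matrix.toEuclideanLin W)‖

/-- Membership in `E_{h,σ}` with `σ = ReLU`. -/
def IsEulerStep {h : ℕ} (Φ : EuclideanSpace ℝ (Fin h) → EuclideanSpace ℝ (Fin h)) : Prop :=
  ∃ (k : ℕ) (W : Matrix (Fin k) (Fin h) ℝ) (b : EuclideanSpace ℝ (Fin k)) (τ : ℝ),
    0 ≤ τ ∧ τ ≤ 2 ∧ specNorm W ≤ 1 ∧
    ∀ x, Φ x = x - τ • matVec W.transpose (entrywise relu (matVec W x + b))

def compChain {α : Type*} : (L : ℕ) → (Fin L → α → α) → α → α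
  | 0, _, x => x
  | L + 1, Φ, x => Φ (Fin.last L) (compChain L (fun i => Φ i.castSucc) x)

/-- Membership in `G_{d,σ}(X,ℝ)` with `σ = ReLU`. -/
def InG {d : ℕ} (X : Set (EuclideanSpace ℝ (Fin d))) (g : EuclideanSpace ℝ (Fin d) → ℝ) : Prop :=
  LipschitzOnWith 1 g X ∧
  ∃ (h L : ℕ) (Qhat : Matrix (Fin h) (Fin d) ℝ) (qhat : EuclideanSpace ℝ (Fin h))
    (Φ : Fin L → (EuclideanSpace ℝ (Fin h) → EuclideanSpace ℝ (Fin h)))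
    (v : EuclideanSpace ℝ (Fin h)),
    (∀ ℓ, IsEulerStep (Φ ℓ)) ∧ ‖v‖ = 1 ∧
    ∀ x ∈ X, g x = ∑ i, v i * compChain L Φ (matVec Qhat x + qhat) i

def concatE {h₁ h₂ : ℕ} (u : EuclideanSpace ℝ (Fin h₁)) (v : EuclideanSpace ℝ (Fin h₂)) :
    EuclideanSpace ℝ (Fin (h₁ + h₂)) :=
  WithLp.toLp 2 (Fin.append (fun i => u i) (fun i => v i))

/-- The residual blocks in `Ẽ_{h,σ}`: `(max{x₁,x₂}, min{x₁,x₂}, x₃, Φ'(x₄,…,x_{h+3}))`. -/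
def tildeLayer {h : ℕ} (Φ' : EuclideanSpace ℝ (Fin h) → EuclideanSpace ℝ (Fin h))
    (x : EuclideanSpace ℝ (Fin (h + 3))) : EuclideanSpace ℝ (Fin (h + 3)) :=
  WithLp.toLp 2 fun j =>
    if _h0 : (j : ℕ) = 0 then max (x ⟨0, by omega⟩) (x ⟨1, by omega⟩)
    else if _h1 : (j : ℕ) = 1 then min (x ⟨0, by omega⟩) (x ⟨1, by omega⟩)
    else if _h2 : (j : ℕ) = 2 then x ⟨2, by omega⟩
    else Φ' (WithLp.toLp 2 (fun i => x ⟨(i : ℕ) + 3, by have := i.isLt; omega⟩))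
      ⟨(j : ℕ) - 3, by have := j.isLt; omega⟩

/-- Membership in `Ẽ_{h,σ}` with `σ = ReLU`. -/
def IsTildeLayer {h : ℕ} (Φ : EuclideanSpace ℝ (Fin (h + 3)) → EuclideanSpace ℝ (Fin (h + 3))) :
    Prop :=
  ∃ Φ', IsEulerStep Φ' ∧ ∀ x, Φ x = tildeLayer Φ' x

def emb0 {n : ℕ} : Fin 1 → Fin (n + 3) := fun _ => ⟨0, by omega⟩
def emb1 {n : ℕ} : Fin 1 → Fin (n + 3) := fun _ => ⟨1, by omega⟩
def emb2 {n : ℕ} : Fin 1 → Fin (n + 3) := fun _ => ⟨2, by omega⟩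
def embT {n : ℕ} : Fin n → Fin (n + 3) := fun i => ⟨(i : ℕ) + 3, by have := i.isLt; omega⟩

/-- Membership in `R_{d,m}` for `m = (1,1,1,n)`: each block row of the matrix has spectral
norm at most `1`. -/
def memRm {d n : ℕ} (Q : Matrix (Fin (n + 3)) (Fin d) ℝ) : Prop :=
  specNorm (Q.submatrix emb0 id) ≤ 1 ∧ specNorm (Q.submatrix emb1 id) ≤ 1 ∧
    specNorm (Q.submatrix emb2 id) ≤ 1 ∧ specNorm (Q.submatrix embT id) ≤ 1

def rowBlockSum {n r : ℕ} (A : Matrix (Fin (n + 3)) (Fin (n + 3)) ℝ)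
    (e : Fin r → Fin (n + 3)) : ℝ :=
  specNorm (A.submatrix e emb0) + specNorm (A.submatrix e emb1) +
    specNorm (A.submatrix e emb2) + specNorm (A.submatrix e embT)

/-- Membership in `L_m` for `m = (1,1,1,n)`: for each block row, the sum of the spectral
norms of the blocks is at most `1`. -/
def memLm {n : ℕ} (A : Matrix (Fin (n + 3)) (Fin (n + 3)) ℝ) : Prop :=
  rowBlockSum A emb0 ≤ 1 ∧ rowBlockSum A emb1 ≤ 1 ∧
    rowBlockSum A emb2 ≤ 1 ∧ rowBlockSum A embT ≤ 1

/-- `Φ_{L+1} ∘ A_L ∘ ⋯ ∘ Φ₂ ∘ A₁ ∘ Φ₁`, the alternating composition. -/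
def altChain {α : Type*} : (L : ℕ) → (Fin (L + 1) → α → α) → (Fin L → α → α) → α → α
  | 0, Φ, _, x => Φ 0 x
  | L + 1, Φ, A, x =>
      Φ (Fin.last (L + 1)) (A (Fin.last L)
        (altChain L (fun i => Φ i.castSucc) (fun i => A i.castSucc) x))

/-- Membership in the fixed-width class `tilde-G_{d,σ,n+3}(X,ℝ)` with `σ = ReLU`. -/
def InTildeG {d n : ℕ} (X : Set (EuclideanSpace ℝ (Fin d)))
    (g : EuclideanSpace ℝ (Fin d) → ℝ) : Prop :=
  ∃ (L : ℕ) (Qhat : Matrix (Fin (n + 3)) (Fin d) ℝ) (qhat : EuclideanSpace ℝ (Fin (n + 3)))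
    (Φ : Fin (L + 1) → (EuclideanSpace ℝ (Fin (n + 3)) → EuclideanSpace ℝ (Fin (n + 3))))
    (Ahat : Fin L → Matrix (Fin (n + 3)) (Fin (n + 3)) ℝ)
    (ahat : Fin L → EuclideanSpace ℝ (Fin (n + 3)))
    (v : EuclideanSpace ℝ (Fin (n + 3))),
    memRm Qhat ∧ (∀ ℓ, IsTildeLayer (Φ ℓ)) ∧ (∀ ℓ, memLm (Ahat ℓ)) ∧ (∑ i, |v i|) ≤ 1 ∧
    ∀ x ∈ X,
      g x = ∑ i, v i *
        altChain L Φ (fun ℓ u => matVec (Ahat ℓ) u + ahat ℓ) (matVec Qhat x + qhat) i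

end

/-!
Run the two networks side by side on the concatenated state `(y₁, y₂)`. A layer of `f` becomes a
layer acting on `y₁` alone: its weight matrix, padded with zero columns for the `y₂` block, has no
larger spectral norm, so the lifted map is again in `E_{h₁+h₂,σ}`; likewise for `g` on `y₂`. The
lifted layers of `f` followed by those of `g` send `(Q₁ x, Q₂ x)` to the pair of hidden states. The
readout `M = â âᵀ + b̂ b̂ᵀ` with `â = (v₁, 0)`, `b̂ = (0, v₂)` is the orthogonal projection onto
`span {â, b̂}`, hence symmetric, positive semidefinite and of norm at most `1`, and it maps
`(y₁, y₂)` to `(⟪v₁, y₁⟫ v₁, ⟪v₂, y₂⟫ v₂)`.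
-/

open Matrix
open scoped RealInnerProductSpace

section Blocks

variable {h₁ h₂ : ℕ}

def leftE (x : EuclideanSpace ℝ (Fin (h₁ + h₂))) : EuclideanSpace ℝ (Fin h₁) :=
  WithLp.toLp 2 fun i => x (Fin.castAdd h₂ i)

def rightE (x : EuclideanSpace ℝ (Fin (h₁ + h₂))) : EuclideanSpace ℝ (Fin h₂) :=
  WithLp.toLp 2 fun i => x (Fin.natAdd h₁ i)

@[simp] lemma leftE_apply (x : EuclideanSpace ℝ (Fin (h₁ + h₂))) (i : Fin h₁) :
    leftE x i = x (Fin.castAdd h₂ i) := rfl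

@[simp] lemma rightE_apply (x : EuclideanSpace ℝ (Fin (h₁ + h₂))) (i : Fin h₂) :
    rightE x i = x (Fin.natAdd h₁ i) := rfl

@[simp] lemma concatE_castAdd (u : EuclideanSpace ℝ (Fin h₁)) (v : EuclideanSpace ℝ (Fin h₂))
    (i : Fin h₁) : concatE u v (Fin.castAdd h₂ i) = u i :=
  Fin.append_left _ _ i

@[simp] lemma concatE_natAdd (u : EuclideanSpace ℝ (Fin h₁)) (v : EuclideanSpace ℝ (Fin h₂))
    (i : Fin h₂) : concatE u v (Fin.natAdd h₁ i) = v i :=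
  Fin.append_right _ _ i

@[simp] lemma leftE_concatE (u : EuclideanSpace ℝ (Fin h₁)) (v : EuclideanSpace ℝ (Fin h₂)) :
    leftE (concatE u v) = u := by
  ext i; simp

@[simp] lemma rightE_concatE (u : EuclideanSpace ℝ (Fin h₁)) (v : EuclideanSpace ℝ (Fin h₂)) :
    rightE (concatE u v) = v := by
  ext i; simp

lemma concatE_leftE_rightE (x : EuclideanSpace ℝ (Fin (h₁ + h₂))) :
    concatE (leftE x) (rightE x) = x := by
  ext j; induction j using Fin.addCases <;> simp

lemma norm_sq_concatE (u : EuclideanSpace ℝ (Fin h₁)) (v : EuclideanSpace ℝ (Fin h₂)) :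
    ‖concatE u v‖ ^ 2 = ‖u‖ ^ 2 + ‖v‖ ^ 2 := by
  simp only [EuclideanSpace.norm_sq_eq, Fin.sum_univ_add]
  simp

lemma norm_sq_eq_norm_sq_leftE_add_norm_sq_rightE (x : EuclideanSpace ℝ (Fin (h₁ + h₂))) :
    ‖x‖ ^ 2 = ‖leftE x‖ ^ 2 + ‖rightE x‖ ^ 2 := by
  rw [← norm_sq_concatE, concatE_leftE_rightE]

lemma norm_leftE_le (x : EuclideanSpace ℝ (Fin (h₁ + h₂))) : ‖leftE x‖ ≤ ‖x‖ := by
  have := norm_sq_eq_norm_sq_leftE_add_norm_sq_rightE x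
  nlinarith [norm_nonneg (leftE x), norm_nonneg x]

lemma norm_rightE_le (x : EuclideanSpace ℝ (Fin (h₁ + h₂))) : ‖rightE x‖ ≤ ‖x‖ := by
  have := norm_sq_eq_norm_sq_leftE_add_norm_sq_rightE x
  nlinarith [norm_nonneg (rightE x), norm_nonneg x]

end Blocks

section SpectralNorm

variable {k h : ℕ}

lemma matVec_apply (W : Matrix (Fin k) (Fin h) ℝ) (x : EuclideanSpace ℝ (Fin h)) (i : Fin k) :
    matVec W x i = ∑ j, W i j * x j := rfl

lemma specNorm_nonneg (W : Matrix (Fin k) (Fin h) ℝ) : 0 ≤ specNorm W :=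
  norm_nonneg _

lemma norm_matVec_le (W : Matrix (Fin k) (Fin h) ℝ) (x : EuclideanSpace ℝ (Fin h)) :
    ‖matVec W x‖ ≤ specNorm W * ‖x‖ :=
  (LinearMap.toContinuousLinearMap (Matrix.toEuclideanLin W)).le_opNorm x

lemma specNorm_le_bound (W : Matrix (Fin k) (Fin h) ℝ) {C : ℝ} (hC : 0 ≤ C)
    (hW : ∀ x, ‖matVec W x‖ ≤ C * ‖x‖) : specNorm W ≤ C :=
  ContinuousLinearMap.opNorm_le_bound _ hC hW

end SpectralNorm

section Lifts

variable {k h₁ h₂ : ℕ}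

def padL (W : Matrix (Fin k) (Fin h₁) ℝ) : Matrix (Fin k) (Fin (h₁ + h₂)) ℝ :=
  Matrix.of fun i => Fin.append (W i) 0

def padR (W : Matrix (Fin k) (Fin h₂) ℝ) : Matrix (Fin k) (Fin (h₁ + h₂)) ℝ :=
  Matrix.of fun i => Fin.append 0 (W i)

lemma matVec_padL (W : Matrix (Fin k) (Fin h₁) ℝ) (x : EuclideanSpace ℝ (Fin (h₁ + h₂))) :
    matVec (padL W) x = matVec W (leftE x) := by
  ext i; simp [matVec_apply, padL, Fin.sum_univ_add]

lemma matVec_padR (W : Matrix (Fin k) (Fin h₂) ℝ) (x : EuclideanSpace ℝ (Fin (h₁ + h₂))) :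
    matVec (padR W) x = matVec W (rightE x) := by
  ext i; simp [matVec_apply, padR, Fin.sum_univ_add]

lemma matVec_transpose_padL (W : Matrix (Fin k) (Fin h₁) ℝ) (y : EuclideanSpace ℝ (Fin k)) :
    matVec (padL (h₂ := h₂) W)ᵀ y = concatE (matVec Wᵀ y) 0 := by
  ext j; induction j using Fin.addCases <;> simp [matVec_apply, padL]

lemma matVec_transpose_padR (W : Matrix (Fin k) (Fin h₂) ℝ) (y : EuclideanSpace ℝ (Fin k)) :
    matVec (padR (h₁ := h₁) W)ᵀ y = concatE 0 (matVec Wᵀ y) := by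
  ext j; induction j using Fin.addCases <;> simp [matVec_apply, padR]

lemma specNorm_padL_le (W : Matrix (Fin k) (Fin h₁) ℝ) :
    specNorm (padL (h₂ := h₂) W) ≤ specNorm W :=
  specNorm_le_bound _ (specNorm_nonneg W) fun x => by
    rw [matVec_padL]
    exact (norm_matVec_le W _).trans
      (mul_le_mul_of_nonneg_left (norm_leftE_le x) (specNorm_nonneg W))

lemma specNorm_padR_le (W : Matrix (Fin k) (Fin h₂) ℝ) :
    specNorm (padR (h₁ := h₁) W) ≤ specNorm W :=
  specNorm_le_bound _ (specNorm_nonneg W) fun x => by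
    rw [matVec_padR]
    exact (norm_matVec_le W _).trans
      (mul_le_mul_of_nonneg_left (norm_rightE_le x) (specNorm_nonneg W))

def liftL (Φ : EuclideanSpace ℝ (Fin h₁) → EuclideanSpace ℝ (Fin h₁))
    (x : EuclideanSpace ℝ (Fin (h₁ + h₂))) : EuclideanSpace ℝ (Fin (h₁ + h₂)) :=
  concatE (Φ (leftE x)) (rightE x)

def liftR (Φ : EuclideanSpace ℝ (Fin h₂) → EuclideanSpace ℝ (Fin h₂))
    (x : EuclideanSpace ℝ (Fin (h₁ + h₂))) : EuclideanSpace ℝ (Fin (h₁ + h₂)) :=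
  concatE (leftE x) (Φ (rightE x))

lemma IsEulerStep.liftL {Φ : EuclideanSpace ℝ (Fin h₁) → EuclideanSpace ℝ (Fin h₁)}
    (hΦ : IsEulerStep Φ) : IsEulerStep (liftL (h₂ := h₂) Φ) := by
  obtain ⟨k, W, b, τ, hτ₀, hτ₂, hW, hΦx⟩ := hΦ
  refine ⟨k, padL W, b, τ, hτ₀, hτ₂, (specNorm_padL_le W).trans hW, fun x => ?_⟩
  ext j; induction j using Fin.addCases <;>
    simp [_root_.liftL, hΦx, matVec_padL, matVec_transpose_padL]

lemma IsEulerStep.liftR {Φ : EuclideanSpace ℝ (Fin h₂) → EuclideanSpace ℝ (Fin h₂)}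
    (hΦ : IsEulerStep Φ) : IsEulerStep (liftR (h₁ := h₁) Φ) := by
  obtain ⟨k, W, b, τ, hτ₀, hτ₂, hW, hΦx⟩ := hΦ
  refine ⟨k, padR W, b, τ, hτ₀, hτ₂, (specNorm_padR_le W).trans hW, fun x => ?_⟩
  ext j; induction j using Fin.addCases <;>
    simp [_root_.liftR, hΦx, matVec_padR, matVec_transpose_padR]

end Lifts

section Chains

lemma compChain_add {α : Type*} (m n : ℕ) (Φ : Fin (m + n) → α → α) (x : α) :
    compChain (m + n) Φ x =
      compChain n (fun i => Φ (Fin.natAdd m i)) (compChain m (fun i => Φ (Fin.castAdd n i)) x) := by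
  induction n with
  | zero => rfl
  | succ n ih => exact congrArg (Φ (Fin.last (m + n))) (ih _)

lemma compChain_semiconj {α β : Type*} {L : ℕ} (e : α → β) {Φ : Fin L → α → α}
    {Ψ : Fin L → β → β} (h : ∀ i x, Ψ i (e x) = e (Φ i x)) (x : α) :
    compChain L Ψ (e x) = e (compChain L Φ x) := by
  induction L with
  | zero => rfl
  | succ L ih => exact (congrArg _ (ih fun i => h i.castSucc)).trans (h _ _)

lemma compChain_append_liftL_liftR {h₁ h₂ L₁ L₂ : ℕ}
    (Φ₁ : Fin L₁ → EuclideanSpace ℝ (Fin h₁) → EuclideanSpace ℝ (Fin h₁))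
    (Φ₂ : Fin L₂ → EuclideanSpace ℝ (Fin h₂) → EuclideanSpace ℝ (Fin h₂))
    (u : EuclideanSpace ℝ (Fin h₁)) (v : EuclideanSpace ℝ (Fin h₂)) :
    compChain (L₁ + L₂) (Fin.append (fun i => liftL (Φ₁ i)) (fun i => liftR (Φ₂ i)))
        (concatE u v) =
      concatE (compChain L₁ Φ₁ u) (compChain L₂ Φ₂ v) := by
  rw [compChain_add]
  simp only [Fin.append_left, Fin.append_right]
  rw [compChain_semiconj (concatE · v) (Φ := Φ₁) fun _ _ => by simp [liftL],
    compChain_semiconj (concatE _) (Φ := Φ₂) fun _ _ => by simp [liftR]]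

end Chains

lemma real_inner_eq_sum_mul {n : ℕ} (v y : EuclideanSpace ℝ (Fin n)) : ⟪v, y⟫ = ∑ i, v i * y i := by
  simp [PiLp.inner_apply, mul_comm]

section Readout

variable {h₁ h₂ : ℕ} (v₁ : EuclideanSpace ℝ (Fin h₁)) (v₂ : EuclideanSpace ℝ (Fin h₂))

def readout : Matrix (Fin (h₁ + h₂)) (Fin (h₁ + h₂)) ℝ :=
  vecMulVec (concatE v₁ 0).ofLp (concatE v₁ 0).ofLp +
    vecMulVec (concatE 0 v₂).ofLp (concatE 0 v₂).ofLp

lemma readout_posSemidef : (readout v₁ v₂).PosSemidef :=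
  (posSemidef_vecMulVec_self_star _).add (posSemidef_vecMulVec_self_star _)

lemma readout_isSymm : (readout v₁ v₂).IsSymm := by
  simpa [Matrix.IsHermitian, Matrix.IsSymm] using (readout_posSemidef v₁ v₂).isHermitian

lemma matVec_readout (x : EuclideanSpace ℝ (Fin (h₁ + h₂))) :
    matVec (readout v₁ v₂) x = concatE (⟪v₁, leftE x⟫ • v₁) (⟪v₂, rightE x⟫ • v₂) := by
  ext j
  induction j using Fin.addCases <;>
    simp [readout, matVec_apply, vecMulVec_apply, Fin.sum_univ_add, PiLp.inner_apply,
      Finset.mul_sum, mul_assoc, mul_comm]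

variable {v₁ v₂} in
lemma specNorm_readout_le (hv₁ : ‖v₁‖ = 1) (hv₂ : ‖v₂‖ = 1) : specNorm (readout v₁ v₂) ≤ 1 := by
  refine specNorm_le_bound _ zero_le_one fun x => ?_
  have hy₁ : ‖⟪v₁, leftE x⟫ • v₁‖ ≤ ‖leftE x‖ := by
    simpa [norm_smul, hv₁] using abs_real_inner_le_norm v₁ (leftE x)
  have hy₂ : ‖⟪v₂, rightE x⟫ • v₂‖ ≤ ‖rightE x‖ := by
    simpa [norm_smul, hv₂] using abs_real_inner_le_norm v₂ (rightE x)
  rw [one_mul, matVec_readout, ← pow_le_pow_iff_left₀ (norm_nonneg _) (norm_nonneg _) two_ne_zero,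
    norm_sq_concatE, norm_sq_eq_norm_sq_leftE_add_norm_sq_rightE x]
  gcongr

end Readout

/-- Two networks in `G_{d,ReLU}(X,ℝ)` can be run in parallel: the pair
`(f(x)v₁, g(x)v₂)` is realised as a symmetric PSD matrix `M` with `‖M‖₂ ≤ 1` applied to a
common chain of residual layers in `E_{h₁+h₂,ReLU}` on the concatenated affine lifting. -/
theorem stmt5 (d : ℕ) (X : Set (EuclideanSpace ℝ (Fin d)))
    (f g : EuclideanSpace ℝ (Fin d) → ℝ) (hf : InG X f) (hg : InG X g) :
    ∃ (L h₁ h₂ : ℕ) (v₁ : EuclideanSpace ℝ (Fin h₁)) (v₂ : EuclideanSpace ℝ (Fin h₂))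
      (Qhat₁ : Matrix (Fin h₁) (Fin d) ℝ) (qhat₁ : EuclideanSpace ℝ (Fin h₁))
      (Qhat₂ : Matrix (Fin h₂) (Fin d) ℝ) (qhat₂ : EuclideanSpace ℝ (Fin h₂))
      (Φ : Fin L → (EuclideanSpace ℝ (Fin (h₁ + h₂)) → EuclideanSpace ℝ (Fin (h₁ + h₂))))
      (M : Matrix (Fin (h₁ + h₂)) (Fin (h₁ + h₂)) ℝ),
      ‖v₁‖ = 1 ∧ ‖v₂‖ = 1 ∧ (∀ ℓ, IsEulerStep (Φ ℓ)) ∧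
      M.IsSymm ∧ M.PosSemidef ∧ specNorm M ≤ 1 ∧
      ∀ x ∈ X,
        concatE (f x • v₁) (g x • v₂) =
          matVec M (compChain L Φ (concatE (matVec Qhat₁ x + qhat₁) (matVec Qhat₂ x + qhat₂))) := by
  obtain ⟨-, h₁, L₁, Q₁, q₁, Φ₁, v₁, hΦ₁, hv₁, hf⟩ := hf
  obtain ⟨-, h₂, L₂, Q₂, q₂, Φ₂, v₂, hΦ₂, hv₂, hg⟩ := hg
  refine ⟨L₁ + L₂, h₁, h₂, v₁, v₂, Q₁, q₁, Q₂, q₂,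
    Fin.append (fun i => liftL (Φ₁ i)) (fun i => liftR (Φ₂ i)), readout v₁ v₂, hv₁, hv₂,
    Fin.addCases (by simpa using fun i => (hΦ₁ i).liftL) (by simpa using fun i => (hΦ₂ i).liftR),
    readout_isSymm v₁ v₂, readout_posSemidef v₁ v₂, specNorm_readout_le hv₁ hv₂, fun x hx => ?_⟩
  rw [compChain_append_liftL_liftR, matVec_readout, leftE_concatE, rightE_concatE, hf x hx,
    hg x hx, real_inner_eq_sum_mul, real_inner_eq_sum_mul]
end

section
/- Let d, k ∈ ℕ, l₁, …, l_k ∈ ℕ, and let a_{i,j} ∈ ℝ^d with ‖a_{i,j}‖₂ ≤ 1 and b_{i,j} ∈ ℝ for i = 1,…,k, j = 1,…,l_i. Define the piecewise affine 1-Lipschitz function f(x) = max_{1≤i≤k} min_{1≤j≤l_i} (a_{i,j}ᵀ x + b_{i,j}). Then f can be represented exactly by a network in the fixed-width class tilde-G_{d,σ,h}(ℝ^d,ℝ) with σ = ReLU and h = d + 3: there exist L ∈ ℕ, Q ∈ R_{d,m}, affine maps A₁,…,A_{L−1} ∈ L_m, layers Φ₁,…,Φ_L ∈ Ẽ_{d,σ},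 and v ∈ ℝ^{d+3} with ‖v‖₁ ≤ 1, such that f(x) = vᵀ (Φ_L ∘ A_{L−1} ∘ ⋯ ∘ A₁ ∘ Φ₁ ∘ Q)(x) for all x ∈ ℝ^d. -/
open scoped BigOperators

/-!
Keep `x` in the last `d` coordinates and use the first three as registers. With the trivial
residual part, a layer of `Ẽ` is `(u₀, u₁, u₂, y) ↦ (max u₀ u₁, min u₀ u₁, u₂, y)`, so after an
affine map of `L_m` it can take the maximum or minimum of two affine combinations of the registers
and of `x` whose weights have total norm at most one. The inner minimum over `j` of
`aᵢⱼᵀ x + bᵢⱼ` is accumulated in register 1 one term at a time while the running outer maximum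
waits in register 2; then register 0 receives the maximum of registers 1 and 2.
-/

namespace MaxMinNet

section SpectralNorm

variable {k n : ℕ}

lemma matVec_apply (W : Matrix (Fin k) (Fin n) ℝ) (x : EuclideanSpace ℝ (Fin n)) (i : Fin k) :
    matVec W x i = ∑ j, W i j * x j := by
  simp [matVec, Matrix.toLpLin_apply, Matrix.mulVec, dotProduct]

lemma specNorm_le_of_norm_matVec_le (W : Matrix (Fin k) (Fin n) ℝ) {c : ℝ} (hc : 0 ≤ c)
    (H : ∀ x, ‖matVec W x‖ ≤ c * ‖x‖) : specNorm W ≤ c :=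
  ContinuousLinearMap.opNorm_le_bound _ hc H

@[simp]
lemma specNorm_zero : specNorm (0 : Matrix (Fin k) (Fin n) ℝ) = 0 := by
  simp [specNorm]

lemma specNorm_one_le : specNorm (1 : Matrix (Fin n) (Fin n) ℝ) ≤ 1 :=
  specNorm_le_of_norm_matVec_le _ zero_le_one fun x => by simp [matVec]

lemma specNorm_row_le (W : Matrix (Fin 1) (Fin n) ℝ) :
    specNorm W ≤ ‖WithLp.toLp 2 (W 0)‖ := by
  refine specNorm_le_of_norm_matVec_le W (norm_nonneg _) fun x => ?_
  have hinner : matVec W x 0 = inner ℝ (WithLp.toLp 2 (W 0)) x := by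
    simp [matVec_apply, PiLp.inner_apply, mul_comm]
  calc ‖matVec W x‖ = |matVec W x 0| := by
        simp [EuclideanSpace.norm_eq, Real.sqrt_sq_eq_abs]
    _ ≤ _ := hinner ▸ abs_real_inner_le_norm _ _

lemma specNorm_le_abs (W : Matrix (Fin 1) (Fin 1) ℝ) : specNorm W ≤ |W 0 0| := by
  refine (specNorm_row_le W).trans_eq ?_
  simp [EuclideanSpace.norm_eq, Real.sqrt_sq_eq_abs]

end SpectralNorm

section Registers

variable {d : ℕ}

abbrev State (d : ℕ) := EuclideanSpace ℝ (Fin (d + 3))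

def reg (m : Fin 3) : Fin (d + 3) := ⟨m, by omega⟩

def tail (s : State d) : EuclideanSpace ℝ (Fin d) := WithLp.toLp 2 fun t => s (embT t)

lemma emb0_eq : (emb0 : Fin 1 → Fin (d + 3)) = fun _ => reg 0 := rfl

lemma emb1_eq : (emb1 : Fin 1 → Fin (d + 3)) = fun _ => reg 1 := rfl

lemma emb2_eq : (emb2 : Fin 1 → Fin (d + 3)) = fun _ => reg 2 := rfl

lemma reg_ne_embT (m : Fin 3) (t : Fin d) : reg m ≠ embT t := by
  simp [reg, embT, Fin.ext_iff]; omega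

@[simp]
lemma embT_inj {t u : Fin d} : embT t = embT u ↔ t = u := by
  simp [embT, Fin.ext_iff]

lemma sum_fin_add_three (f : Fin (d + 3) → ℝ) :
    ∑ j, f j = ∑ m : Fin 3, f (reg m) + ∑ t, f (embT t) := by
  simp only [Fin.sum_univ_succ (n := d + 2), Fin.sum_univ_succ (n := d + 1),
    Fin.sum_univ_succ (n := d), Fin.sum_univ_three, add_assoc]
  rfl

def sortLayer : State d → State d := tildeLayer id

lemma isTildeLayer_sortLayer : IsTildeLayer (sortLayer (d := d)) := by
  refine ⟨id, ⟨0, 0, 0, 0, le_rfl, by norm_num, by simp, fun x => by simp⟩, fun _ => rfl⟩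

lemma sortLayer_reg0 (s : State d) : sortLayer s (reg 0) = max (s (reg 0)) (s (reg 1)) := rfl

lemma sortLayer_reg1 (s : State d) : sortLayer s (reg 1) = min (s (reg 0)) (s (reg 1)) := rfl

lemma sortLayer_reg2 (s : State d) : sortLayer s (reg 2) = s (reg 2) := rfl

@[simp]
lemma tail_apply (s : State d) (t : Fin d) : tail s t = s (embT t) := rfl

lemma tail_sortLayer (s : State d) : tail (sortLayer s) = tail s := rfl

end Registers

/-- The affine map `u ↦ mat u + vec` whose register rows are `(w m, a m)` with offset `c m` and
whose tail rows are those of the identity. -/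
structure RegStep (d : ℕ) where
  w : Matrix (Fin 3) (Fin 3) ℝ
  a : Fin 3 → EuclideanSpace ℝ (Fin d)
  c : Fin 3 → ℝ

namespace RegStep

variable {d : ℕ} (S : RegStep d)

def mat : Matrix (Fin (d + 3)) (Fin (d + 3)) ℝ := fun i j =>
  if hi : (i : ℕ) < 3 then
    if hj : (j : ℕ) < 3 then S.w ⟨i, hi⟩ ⟨j, hj⟩ else S.a ⟨i, hi⟩ ⟨j - 3, by omega⟩
  else if i = j then 1 else 0

noncomputable def vec : State d :=
  WithLp.toLp 2 fun i => if hi : (i : ℕ) < 3 then S.c ⟨i, hi⟩ else 0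

def input (s : State d) (m : Fin 3) : ℝ :=
  ∑ n, S.w m n * s (reg n) + ∑ t, S.a m t * tail s t + S.c m

noncomputable def layer (s : State d) : State d := sortLayer (matVec S.mat s + S.vec)

def IsRowBounded : Prop := ∀ m, ∑ n, |S.w m n| + ‖S.a m‖ ≤ 1

lemma mat_reg_reg (m n : Fin 3) : S.mat (reg m) (reg n) = S.w m n := by
  simp [mat, reg]

lemma mat_reg_embT (m : Fin 3) (t : Fin d) : S.mat (reg m) (embT t) = S.a m t := by
  simp [mat, reg, embT]

lemma mat_embT (t : Fin d) (j : Fin (d + 3)) :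
    S.mat (embT t) j = if embT t = j then 1 else 0 := by
  simp [mat, embT]

lemma affine_reg (s : State d) (m : Fin 3) : (matVec S.mat s + S.vec) (reg m) = S.input s m := by
  rw [PiLp.add_apply, matVec_apply, sum_fin_add_three]
  simp only [mat_reg_reg, mat_reg_embT, input, tail_apply]
  simp [vec, reg]

lemma affine_embT (s : State d) (t : Fin d) : (matVec S.mat s + S.vec) (embT t) = s (embT t) := by
  rw [PiLp.add_apply, matVec_apply]
  simp only [mat_embT, ite_mul, one_mul, zero_mul, Finset.sum_ite_eq, Finset.mem_univ, if_true]
  simp [vec, embT]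

lemma layer_reg0 (s : State d) : S.layer s (reg 0) = max (S.input s 0) (S.input s 1) := by
  rw [layer, sortLayer_reg0, affine_reg, affine_reg]

lemma layer_reg1 (s : State d) : S.layer s (reg 1) = min (S.input s 0) (S.input s 1) := by
  rw [layer, sortLayer_reg1, affine_reg, affine_reg]

lemma layer_reg2 (s : State d) : S.layer s (reg 2) = S.input s 2 := by
  rw [layer, sortLayer_reg2, affine_reg]

lemma tail_layer (s : State d) : tail (S.layer s) = tail s := by
  rw [layer, tail_sortLayer]
  ext t
  exact S.affine_embT s t

lemma rowBlockSum_reg_le (m : Fin 3) :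
    rowBlockSum S.mat (fun _ : Fin 1 => reg m) ≤ ∑ n, |S.w m n| + ‖S.a m‖ := by
  have hreg : ∀ n, specNorm (S.mat.submatrix (fun _ => reg m) (fun _ => reg n)) ≤ |S.w m n| :=
    fun n => (specNorm_le_abs _).trans_eq (by simp [mat_reg_reg])
  have htail : specNorm (S.mat.submatrix (fun _ => reg m) embT) ≤ ‖S.a m‖ :=
    (specNorm_row_le _).trans_eq (by congr; ext t; simp [mat_reg_embT])
  rw [Fin.sum_univ_three]
  exact add_le_add (add_le_add (add_le_add (hreg 0) (hreg 1)) (hreg 2)) htail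

lemma rowBlockSum_embT : rowBlockSum S.mat embT = specNorm (1 : Matrix (Fin d) (Fin d) ℝ) := by
  have hreg : ∀ n, S.mat.submatrix embT (fun _ : Fin 1 => reg n) = 0 := fun n => by
    ext t _
    simp [mat_embT, (reg_ne_embT n t).symm]
  have hid : S.mat.submatrix embT embT = 1 := by
    ext t u
    rw [Matrix.submatrix_apply, mat_embT]
    simp [Matrix.one_apply]
  simp [rowBlockSum, emb0_eq, emb1_eq, emb2_eq, hreg, hid]

lemma memLm_mat (hS : S.IsRowBounded) : memLm S.mat :=
  ⟨(S.rowBlockSum_reg_le 0).trans (hS 0), (S.rowBlockSum_reg_le 1).trans (hS 1),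
    (S.rowBlockSum_reg_le 2).trans (hS 2), S.rowBlockSum_embT ▸ specNorm_one_le⟩

section Instructions

variable (a : EuclideanSpace ℝ (Fin d)) (c : ℝ) (s : State d)

def load : RegStep d := ⟨!![0, 0, 0; 0, 0, 0; 1, 0, 0], ![a, a, 0], ![c, c, 0]⟩

def minWith : RegStep d := ⟨!![0, 0, 0; 0, 1, 0; 0, 0, 1], ![a, 0, 0], ![c, 0, 0]⟩

def copyOut : RegStep d := ⟨!![0, 1, 0; 0, 1, 0; 0, 0, 0], 0, 0⟩

def maxOut : RegStep d := ⟨!![0, 1, 0; 0, 0, 1; 0, 0, 0], 0, 0⟩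

lemma load_reg1 : (load a c).layer s (reg 1) = ∑ t, a t * tail s t + c := by
  simp [layer_reg1, input, load, Fin.sum_univ_three]

lemma load_reg2 : (load a c).layer s (reg 2) = s (reg 0) := by
  simp [layer_reg2, input, load, Fin.sum_univ_three]

lemma minWith_reg1 :
    (minWith a c).layer s (reg 1) = min (∑ t, a t * tail s t + c) (s (reg 1)) := by
  simp [layer_reg1, input, minWith, Fin.sum_univ_three]

lemma minWith_reg2 : (minWith a c).layer s (reg 2) = s (reg 2) := by
  simp [layer_reg2, input, minWith, Fin.sum_univ_three]

lemma copyOut_reg0 : (copyOut (d := d)).layer s (reg 0) = s (reg 1) := by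
  simp [layer_reg0, input, copyOut, Fin.sum_univ_three]

lemma maxOut_reg0 : (maxOut (d := d)).layer s (reg 0) = max (s (reg 1)) (s (reg 2)) := by
  simp [layer_reg0, input, maxOut, Fin.sum_univ_three]

variable {a}

lemma isRowBounded_load (ha : ‖a‖ ≤ 1) : (load a c).IsRowBounded := by
  intro m; fin_cases m <;> simp [load, Fin.sum_univ_three, ha]

lemma isRowBounded_minWith (ha : ‖a‖ ≤ 1) : (minWith a c).IsRowBounded := by
  intro m; fin_cases m <;> simp [minWith, Fin.sum_univ_three, ha]

lemma isRowBounded_copyOut : (copyOut (d := d)).IsRowBounded := by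
  intro m; fin_cases m <;> simp [copyOut, Fin.sum_univ_three]

lemma isRowBounded_maxOut : (maxOut (d := d)).IsRowBounded := by
  intro m; fin_cases m <;> simp [maxOut, Fin.sum_univ_three]

end Instructions

end RegStep

section Programs

variable {d : ℕ}

open RegStep

noncomputable def run (p : List (RegStep d)) (s : State d) : State d :=
  p.foldl (fun s S => S.layer s) s

lemma run_append (p q : List (RegStep d)) (s : State d) : run (p ++ q) s = run q (run p s) :=
  List.foldl_append

lemma run_singleton (S : RegStep d) (s : State d) : run [S] s = S.layer s := rfl

lemma tail_run (p : List (RegStep d)) (s : State d) : tail (run p s) = tail s := by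
  induction p generalizing s with
  | nil => rfl
  | cons S p ih => exact (ih (S.layer s)).trans (S.tail_layer s)

lemma altChain_eq_run {L : ℕ} (f : Fin L → RegStep d) (s : State d) :
    altChain L (fun _ => sortLayer) (fun ℓ u => matVec (f ℓ).mat u + (f ℓ).vec) s
      = run (List.ofFn f) (sortLayer s) := by
  induction L with
  | zero => rfl
  | succ L ih =>
    rw [List.ofFn_succ', List.concat_eq_append, run_append, ← ih, run_singleton]
    rfl

lemma exists_run_reg1_eq_inf' {ι : Type*} (J : Finset ι) (hJ : J.Nonempty)
    (a : ι → EuclideanSpace ℝ (Fin d)) (b : ι → ℝ) (ha : ∀ j, ‖a j‖ ≤ 1) :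
    ∃ p : List (RegStep d), (∀ S ∈ p, S.IsRowBounded) ∧ ∀ s,
      run p s (reg 1) = J.inf' hJ (fun j => ∑ t, a j t * tail s t + b j) ∧
        run p s (reg 2) = s (reg 0) := by
  induction hJ using Finset.Nonempty.cons_induction with
  | singleton j =>
    refine ⟨[load (a j) (b j)], by simpa using isRowBounded_load _ (ha j), fun s => ?_⟩
    simp [run_singleton, load_reg1, load_reg2]
  | cons j J hj hJ ih =>
    obtain ⟨p, hp, hrun⟩ := ih
    refine ⟨p ++ [minWith (a j) (b j)], ?_, fun s => ?_⟩
    · exact List.forall_mem_append.2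
        ⟨hp, List.forall_mem_singleton.2 (isRowBounded_minWith _ (ha j))⟩
    · simp [run_append, run_singleton, minWith_reg1, minWith_reg2, tail_run, (hrun s).1,
        (hrun s).2, Finset.inf'_cons hJ]

lemma exists_run_reg0_eq_sup' {κ : Type*} (I : Finset κ) (hI : I.Nonempty)
    (F : κ → EuclideanSpace ℝ (Fin d) → ℝ)
    (hF : ∀ i, ∃ p : List (RegStep d), (∀ S ∈ p, S.IsRowBounded) ∧ ∀ s,
      run p s (reg 1) = F i (tail s) ∧ run p s (reg 2) = s (reg 0)) :
    ∃ p : List (RegStep d), (∀ S ∈ p, S.IsRowBounded) ∧ ∀ s,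
      run p s (reg 0) = I.sup' hI (fun i => F i (tail s)) := by
  choose q hq hrun using hF
  induction hI using Finset.Nonempty.cons_induction with
  | singleton i =>
    refine ⟨q i ++ [copyOut], ?_, fun s => ?_⟩
    · exact List.forall_mem_append.2 ⟨hq i, List.forall_mem_singleton.2 isRowBounded_copyOut⟩
    · simp [run_append, run_singleton, copyOut_reg0, (hrun i s).1]
  | cons i I hi hI ih =>
    obtain ⟨p, hp, hrunp⟩ := ih
    refine ⟨p ++ q i ++ [maxOut], ?_, fun s => ?_⟩
    · exact List.forall_mem_append.2
        ⟨List.forall_mem_append.2 ⟨hp, hq i⟩, List.forall_mem_singleton.2 isRowBounded_maxOut⟩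
    · simp [run_append, run_singleton, maxOut_reg0, (hrun i _).1, (hrun i _).2, tail_run, hrunp,
        Finset.sup'_cons hI]

end Programs

section Input

variable {d : ℕ}

def inputMat : Matrix (Fin (d + 3)) (Fin d) ℝ := fun i j => if i = embT j then 1 else 0

lemma memRm_inputMat : memRm (inputMat (d := d)) := by
  have hreg : ∀ m, (inputMat (d := d)).submatrix (fun _ : Fin 1 => reg m) id = 0 := fun m => by
    ext _ t
    simp [inputMat, reg_ne_embT]
  have hid : (inputMat (d := d)).submatrix embT id = 1 := by
    ext t u
    simp [inputMat, Matrix.one_apply]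
  simp [memRm, emb0_eq, emb1_eq, emb2_eq, hreg, hid, specNorm_one_le]

lemma tail_matVec_inputMat (x : EuclideanSpace ℝ (Fin d)) : tail (matVec inputMat x) = x := by
  ext t
  simp [matVec_apply, inputMat]

end Input

end MaxMinNet

open MaxMinNet RegStep in
/-- Every piecewise affine `1`-Lipschitz function, in max–min form with
slopes of Euclidean norm at most `1`, is represented exactly by a network in the fixed-width
class `tilde-G_{d,ReLU,d+3}(ℝ^d,ℝ)`. -/
theorem stmt15 (d k : ℕ) (hk : 0 < k) (l : Fin k → ℕ) (hl : ∀ i, 0 < l i)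
    (a : (i : Fin k) → Fin (l i) → EuclideanSpace ℝ (Fin d))
    (b : (i : Fin k) → Fin (l i) → ℝ)
    (ha : ∀ i j, ‖a i j‖ ≤ 1) :
    InTildeG (n := d) (Set.univ : Set (EuclideanSpace ℝ (Fin d)))
      (fun x => Finset.univ.sup' ⟨⟨0, hk⟩, Finset.mem_univ _⟩ fun i =>
        Finset.univ.inf' ⟨⟨0, hl i⟩, Finset.mem_univ _⟩ fun j =>
          (∑ t, a i j t * x t) + b i j) := by
  obtain ⟨p, hp, hrun⟩ := exists_run_reg0_eq_sup' (d := d) Finset.univ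
    ⟨⟨0, hk⟩, Finset.mem_univ _⟩
    (fun i x => Finset.univ.inf' ⟨⟨0, hl i⟩, Finset.mem_univ _⟩ fun j => ∑ t, a i j t * x t + b i j)
    fun i => exists_run_reg1_eq_inf' _ _ (a i) (b i) (ha i)
  refine ⟨p.length, inputMat, 0, fun _ => sortLayer, fun ℓ => (p.get ℓ).mat,
    fun ℓ => (p.get ℓ).vec, EuclideanSpace.single (reg 0) 1, memRm_inputMat,
    fun _ => isTildeLayer_sortLayer, fun ℓ => memLm_mat _ (hp _ (List.get_mem _ _)),
    by simp [apply_ite abs], fun x _ => ?_⟩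
  simp only [PiLp.single_apply, ite_mul, one_mul, zero_mul, Finset.sum_ite_eq',
    Finset.mem_univ, if_true, add_zero, altChain_eq_run, List.ofFn_get, hrun, tail_sortLayer,
    tail_matVec_inputMat]
end
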